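/- arXiv:1403.7544 — 2 statements merged into one kernel-verified Lean document; each statement's English description precedes it below -/
import Mathlib

section
/- Let k ≥ 1 be an integer, let γ₁,…,γ_k < -1/2 be real numbers, set α = γ₁+…+γ_k and H* = α + k/2 + 1, and suppose H* < 1/2. Let c₀ > 0 and let a: (ℤ₊)^k → ℝ satisfy |a(i₁,…,i_k)| ≤ c₀·i₁^{γ₁}…i_k^{γ_k} for all positive integers i₁,…,i_k, and let Σ: {1,…,k}×{1,…,k} → ℝ satisfy |Σ(p,q)| ≤ 1 for all p, q. For each integer n ≥ 0 define γ(n) = ∑_{σ ∈ S_k} ∑'_{(i₁,…,i_k) ∈ (ℤ₊)^k} a(i₁,…,i_k)·a(i_{σ(1)}+n,…,i_{σ(k)}+n)·∏_{p=1}^k Σ(p, σ(p)), where S_k is the set of all permutations of {1,…,k} and ∑' denotes summation restricted to tuples with pairwise distinct coordinates. Then all these series converge absolutely and ∑_{n=0}^∞ |γ(n)| < ∞; consequently there is c₁ > 0 such that |∑_{m=1}^N ∑_{n=1}^N γ(|m-n|)| ≤ c₁·N for all N ≥ 1. -/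
/-!
Each summand is bounded by `c₀² ∏ⱼ iⱼ^{γⱼ} (iⱼ + n)^{γ'ⱼ}` with `γ'ⱼ = γ_{σ⁻¹ j}`, a product over
the coordinates, so sums over `i` factorise into one-dimensional series. For `n ≥ 1` we trade
decay in `i` for decay in `n` through `(x + n)^{γ'} ≤ n^θ x^{γ' - θ}` (`γ' ≤ θ ≤ 0`). The exponents
`θⱼ` can be chosen so that every series `∑ₓ x^{γⱼ + γ'ⱼ - θⱼ}` converges while `∑ⱼ θⱼ < -1`; this
is exactly where `H* < 1/2`, i.e. `2 ∑ⱼ γⱼ + k < -1`, enters. Hence `|γ(n)| = O(n^{∑ θⱼ})` is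
summable, and the bound on the double sum follows because each lag `|m - n|` occurs at most
twice in every row.
-/

open Finset

lemma summable_pnat_rpow {β : ℝ} (hβ : β < -1) :
    Summable (fun x : ℕ+ => ((x : ℕ) : ℝ) ^ β) :=
  (Real.summable_nat_rpow.mpr hβ).comp_injective PNat.coe_injective

section PiProduct

variable {ι α : Type*} [Fintype ι] {f : ι → α → ℝ}

lemma sum_prod_le_prod_tsum (h0 : ∀ j x, 0 ≤ f j x) (hf : ∀ j, Summable (f j))
    (u : Finset (ι → α)) : ∑ i ∈ u, ∏ j, f j (i j) ≤ ∏ j, ∑' x, f j x := by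
  classical
  calc ∑ i ∈ u, ∏ j, f j (i j)
      ≤ ∑ i ∈ Fintype.piFinset fun j => u.image (· j), ∏ j, f j (i j) :=
        sum_le_sum_of_subset_of_nonneg
          (fun i hi => Fintype.mem_piFinset.mpr fun j => mem_image_of_mem _ hi)
          (fun i _ _ => prod_nonneg fun j _ => h0 j (i j))
    _ = ∏ j, ∑ x ∈ u.image (· j), f j x := (prod_univ_sum _ _).symm
    _ ≤ ∏ j, ∑' x, f j x :=
        prod_le_prod (fun j _ => sum_nonneg fun x _ => h0 j x)
          (fun j _ => (hf j).sum_le_tsum _ fun x _ => h0 j x)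

lemma summable_pi_prod (h0 : ∀ j x, 0 ≤ f j x) (hf : ∀ j, Summable (f j)) :
    Summable (fun i : ι → α => ∏ j, f j (i j)) :=
  summable_of_sum_le (fun i => prod_nonneg fun j _ => h0 j (i j)) (sum_prod_le_prod_tsum h0 hf)

lemma tsum_pi_prod_le_prod_tsum (h0 : ∀ j x, 0 ≤ f j x) (hf : ∀ j, Summable (f j)) :
    ∑' i : ι → α, ∏ j, f j (i j) ≤ ∏ j, ∑' x, f j x :=
  Real.tsum_le_of_sum_le (fun i => prod_nonneg fun j _ => h0 j (i j))
    (sum_prod_le_prod_tsum h0 hf)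

end PiProduct

lemma rpow_mul_add_rpow_le_rpow_add {x n β β' : ℝ} (hx : 0 < x) (hn : 0 ≤ n) (hβ' : β' ≤ 0) :
    x ^ β * (x + n) ^ β' ≤ x ^ (β + β') := by
  rw [Real.rpow_add hx]
  exact mul_le_mul_of_nonneg_left (Real.rpow_le_rpow_of_nonpos hx (by linarith) hβ')
    (by positivity)

lemma rpow_mul_add_rpow_le_rpow_mul_rpow {x n β β' θ : ℝ} (hx : 0 < x) (hn : 0 < n)
    (hθ : θ ≤ 0) (hβ'θ : β' ≤ θ) :
    x ^ β * (x + n) ^ β' ≤ n ^ θ * x ^ (β + β' - θ) := by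
  have hxn : 0 < x + n := by linarith
  calc x ^ β * (x + n) ^ β' = x ^ β * ((x + n) ^ θ * (x + n) ^ (β' - θ)) := by
        rw [← Real.rpow_add hxn, add_sub_cancel]
    _ ≤ x ^ β * (n ^ θ * x ^ (β' - θ)) := by
        gcongr x ^ β * ?_
        exact mul_le_mul (Real.rpow_le_rpow_of_nonpos hn (by linarith) hθ)
          (Real.rpow_le_rpow_of_nonpos hx (by linarith) (by linarith)) (by positivity)
          (by positivity)
    _ = n ^ θ * x ^ (β + β' - θ) := by
        rw [add_sub_assoc, Real.rpow_add hx]; ring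

lemma sum_add_sum_max_add_one_lt {k : ℕ} {γ : Fin k → ℝ} (hγ : ∀ j, γ j < -1/2)
    (hα : 2 * ∑ j, γ j + k < -1) :
    ∑ j, γ j + ∑ j, max (γ j + 1) 0 < -1 := by
  rw [← sum_add_distrib]
  by_cases h : ∀ j, -1 ≤ γ j
  · have hterm : ∀ j ∈ univ, γ j + max (γ j + 1) 0 = 2 * γ j + 1 := fun j _ => by
      rw [max_eq_left (by linarith [h j])]; ring
    rw [sum_congr rfl hterm, sum_add_distrib, ← mul_sum]
    simpa using hα
  · push Not at h
    obtain ⟨j₀, hj₀⟩ := h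
    rw [← add_sum_erase _ _ (mem_univ j₀), max_eq_right (by linarith)]
    have hrest : ∑ j ∈ univ.erase j₀, (γ j + max (γ j + 1) 0) ≤ 0 :=
      sum_nonpos fun j _ => by rcases max_cases (γ j + 1) 0 with h | h <;> linarith [hγ j]
    linarith

lemma exists_decay_exponents {k : ℕ} {γ : Fin k → ℝ} (hγ : ∀ j, γ j < -1/2)
    (hα : 2 * ∑ j, γ j + k < -1) (σ : Equiv.Perm (Fin k)) :
    ∃ θ : Fin k → ℝ, (∀ j, θ j ≤ 0) ∧ (∀ j, γ (σ⁻¹ j) ≤ θ j) ∧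
      (∀ j, γ j + γ (σ⁻¹ j) - θ j < -1) ∧ ∑ j, θ j < -1 := by
  set ε := -1 - (∑ j, γ j + ∑ j, max (γ j + 1) 0)
  have hε : 0 < ε := by linarith [sum_add_sum_max_add_one_lt hγ hα]
  set δ := ε / (k + 1)
  have hδ : 0 < δ := by positivity
  have hkδ : k * δ < ε := by
    rw [mul_div_assoc', div_lt_iff₀ (by positivity)]; linarith
  -- Coordinate `j` loses `max (γ j + 1) 0` of the decay `γ (σ⁻¹ j)` of `(x + n) ^ γ (σ⁻¹ j)`;
  -- the slack `δ` keeps the series in `x` convergent, also in the borderline case `γ j = -1`.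
  refine ⟨fun j => min (max (γ (σ⁻¹ j)) (γ j + γ (σ⁻¹ j) + 1 + δ)) 0,
    fun j => min_le_right _ _, fun j => le_min (le_max_left _ _) (by linarith [hγ (σ⁻¹ j)]),
    fun j => ?_, ?_⟩
  · have : γ j + γ (σ⁻¹ j) + 1 < min (max (γ (σ⁻¹ j)) (γ j + γ (σ⁻¹ j) + 1 + δ)) 0 :=
      lt_min ((lt_add_of_pos_right _ hδ).trans_le (le_max_right _ _))
        (by linarith [hγ j, hγ (σ⁻¹ j)])
    linarith
  · calc ∑ j, min (max (γ (σ⁻¹ j)) (γ j + γ (σ⁻¹ j) + 1 + δ)) 0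
        ≤ ∑ j, (γ (σ⁻¹ j) + max (γ j + 1) 0 + δ) :=
          sum_le_sum fun j _ => (min_le_left _ _).trans <| max_le
            (by linarith [le_max_right (γ j + 1) 0]) (by linarith [le_max_left (γ j + 1) 0])
      _ = ∑ j, γ j + ∑ j, max (γ j + 1) 0 + k * δ := by
          rw [sum_add_distrib, sum_add_distrib, Equiv.sum_comp σ⁻¹ γ]; simp
      _ < -1 := by linarith

section LagTerm

variable {k : ℕ} (a : (Fin k → ℕ+) → ℝ) (S : Fin k → Fin k → ℝ)

def lagTerm (σ : Equiv.Perm (Fin k)) (n : ℕ) (i : Fin k → ℕ+) : ℝ :=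
  a i * a (fun p => ⟨(i (σ p) : ℕ) + n, Nat.add_pos_left (i (σ p)).2 n⟩) * ∏ p, S p (σ p)

variable {a S} {c₀ : ℝ} {γ : Fin k → ℝ}
  (ha : ∀ i : Fin k → ℕ+, |a i| ≤ c₀ * ∏ j, ((i j : ℕ) : ℝ) ^ γ j) (hS : ∀ p q, |S p q| ≤ 1)
include ha hS

lemma abs_lagTerm_le (σ : Equiv.Perm (Fin k)) (n : ℕ) (i : Fin k → ℕ+) :
    |lagTerm a S σ n i|
      ≤ c₀ ^ 2 * ∏ j, ((i j : ℕ) : ℝ) ^ γ j * (((i j : ℕ) : ℝ) + n) ^ γ (σ⁻¹ j) := by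
  have hshift : |a (fun p => ⟨(i (σ p) : ℕ) + n, Nat.add_pos_left (i (σ p)).2 n⟩)|
      ≤ c₀ * ∏ j, (((i j : ℕ) : ℝ) + n) ^ γ (σ⁻¹ j) := by
    refine (ha _).trans_eq (congrArg (c₀ * ·) ?_)
    rw [← Equiv.prod_comp σ fun j => (((i j : ℕ) : ℝ) + n) ^ γ (σ⁻¹ j)]
    simp only [Equiv.Perm.inv_def, Equiv.symm_apply_apply]
    exact prod_congr rfl fun j _ => congrArg (· ^ γ j) (Nat.cast_add _ _)
  have hS' : |∏ p, S p (σ p)| ≤ 1 := by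
    rw [abs_prod]; exact prod_le_one (fun p _ => abs_nonneg _) fun p _ => hS p (σ p)
  have hbound₁ := (abs_nonneg _).trans (ha i)
  have hbound₂ := (abs_nonneg _).trans hshift
  calc |lagTerm a S σ n i|
      = |a i| * |a (fun p => ⟨(i (σ p) : ℕ) + n, Nat.add_pos_left (i (σ p)).2 n⟩)|
          * |∏ p, S p (σ p)| := by rw [lagTerm, abs_mul, abs_mul]
    _ ≤ (c₀ * ∏ j, ((i j : ℕ) : ℝ) ^ γ j) * (c₀ * ∏ j, (((i j : ℕ) : ℝ) + n) ^ γ (σ⁻¹ j)) * 1 :=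
        mul_le_mul (mul_le_mul (ha i) hshift (abs_nonneg _) hbound₁) hS' (abs_nonneg _)
          (mul_nonneg hbound₁ hbound₂)
    _ = _ := by rw [prod_mul_distrib]; ring

lemma summable_abs_lagTerm (hγ : ∀ j, γ j < -1/2) (σ : Equiv.Perm (Fin k)) (n : ℕ) :
    Summable fun i => |lagTerm a S σ n i| := by
  have hmajor := (summable_pi_prod (f := fun j (x : ℕ+) => ((x : ℕ) : ℝ) ^ (γ j + γ (σ⁻¹ j)))
    (fun j x => by positivity)
    (fun j => summable_pnat_rpow (by linarith [hγ j, hγ (σ⁻¹ j)]))).mul_left (c₀ ^ 2)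
  refine hmajor.of_nonneg_of_le (fun i => abs_nonneg _)
    fun i => (abs_lagTerm_le ha hS σ n i).trans ?_
  gcongr with j
  exact rpow_mul_add_rpow_le_rpow_add (by positivity) (by positivity) (by linarith [hγ (σ⁻¹ j)])

lemma tsum_abs_lagTerm_le {σ : Equiv.Perm (Fin k)} {θ : Fin k → ℝ} (hθ0 : ∀ j, θ j ≤ 0)
    (hθ : ∀ j, γ (σ⁻¹ j) ≤ θ j) (hθsum : ∀ j, γ j + γ (σ⁻¹ j) - θ j < -1) {n : ℕ} (hn : 1 ≤ n) :
    ∑' i, |lagTerm a S σ n i|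
      ≤ c₀ ^ 2 * (∏ j, ∑' x : ℕ+, ((x : ℕ) : ℝ) ^ (γ j + γ (σ⁻¹ j) - θ j))
          * (n : ℝ) ^ ∑ j, θ j := by
  let f : Fin k → ℕ+ → ℝ := fun j x => ((x : ℕ) : ℝ) ^ (γ j + γ (σ⁻¹ j) - θ j)
  have h0 : ∀ j x, 0 ≤ f j x := fun j x => Real.rpow_nonneg (Nat.cast_nonneg _) _
  have hf : ∀ j, Summable (f j) := fun j => summable_pnat_rpow (hθsum j)
  have hnpos : (0 : ℝ) < n := by exact_mod_cast hn
  have hpoint : ∀ i, |lagTerm a S σ n i| ≤ c₀ ^ 2 * (n : ℝ) ^ (∑ j, θ j) * ∏ j, f j (i j) := by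
    intro i
    refine (abs_lagTerm_le ha hS σ n i).trans ?_
    rw [Real.rpow_sum_of_pos hnpos, mul_assoc, ← prod_mul_distrib]
    exact mul_le_mul_of_nonneg_left (prod_le_prod (fun j _ => by positivity) fun j _ =>
      rpow_mul_add_rpow_le_rpow_mul_rpow (by positivity) hnpos (hθ0 j) (hθ j)) (by positivity)
  have hmajor := (summable_pi_prod h0 hf).mul_left (c₀ ^ 2 * (n : ℝ) ^ (∑ j, θ j))
  calc ∑' i, |lagTerm a S σ n i|
      ≤ ∑' i : Fin k → ℕ+, c₀ ^ 2 * (n : ℝ) ^ (∑ j, θ j) * ∏ j, f j (i j) :=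
        (hmajor.of_nonneg_of_le (fun i => abs_nonneg _) hpoint).tsum_le_tsum hpoint hmajor
    _ = c₀ ^ 2 * (n : ℝ) ^ (∑ j, θ j) * ∑' i : Fin k → ℕ+, ∏ j, f j (i j) := tsum_mul_left
    _ ≤ c₀ ^ 2 * (n : ℝ) ^ (∑ j, θ j) * ∏ j, ∑' x, f j x := by
        gcongr; exact tsum_pi_prod_le_prod_tsum h0 hf
    _ = _ := by ring

lemma summable_tsum_abs_lagTerm (hγ : ∀ j, γ j < -1/2) (hα : 2 * ∑ j, γ j + k < -1)
    (σ : Equiv.Perm (Fin k)) :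
    Summable fun n : ℕ => ∑' i, |lagTerm a S σ n i| := by
  obtain ⟨θ, hθ0, hθ, hθsum, hdecay⟩ := exists_decay_exponents hγ hα σ
  refine Summable.of_norm_bounded_eventually_nat (g := fun n : ℕ =>
    c₀ ^ 2 * (∏ j, ∑' x : ℕ+, ((x : ℕ) : ℝ) ^ (γ j + γ (σ⁻¹ j) - θ j)) * (n : ℝ) ^ ∑ j, θ j)
    ((Real.summable_nat_rpow.mpr hdecay).mul_left _) ?_
  filter_upwards [Filter.eventually_ge_atTop 1] with n hn
  rw [Real.norm_eq_abs, abs_of_nonneg (tsum_nonneg fun i => abs_nonneg _)]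
  exact tsum_abs_lagTerm_le ha hS hθ0 hθ hθsum hn

end LagTerm

lemma sum_comp_le_tsum_of_injOn {α β : Type*} {f : β → ℝ} (hf : Summable f) (h0 : ∀ b, 0 ≤ f b)
    {s : Finset α} {e : α → β} (he : Set.InjOn e s) :
    ∑ x ∈ s, f (e x) ≤ ∑' b, f b := by
  classical
  rw [← sum_image he]
  exact hf.sum_le_tsum _ fun b _ => h0 b

lemma sum_natAbs_sub_le {f : ℕ → ℝ} (hf : Summable f) (h0 : ∀ d, 0 ≤ f d) (m : ℕ)
    (s : Finset ℕ) : ∑ n ∈ s, f ((m : ℤ) - n).natAbs ≤ 2 * ∑' d, f d := by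
  rw [← sum_filter_add_sum_filter_not s (· ≤ m), two_mul]
  gcongr <;> refine sum_comp_le_tsum_of_injOn hf h0 fun x hx y hy hxy => ?_ <;>
    simp only [coe_filter, Set.mem_ofPred_eq] at hx hy hxy <;> omega

lemma exists_abs_sum_sum_natAbs_sub_le {g : ℕ → ℝ} (hg : Summable fun n => |g n|) :
    ∃ c₁ : ℝ, 0 < c₁ ∧ ∀ N : ℕ,
      |∑ m ∈ Icc 1 N, ∑ n ∈ Icc 1 N, g ((m : ℤ) - n).natAbs| ≤ c₁ * N := by
  set T := ∑' d, |g d|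
  have hT : 0 ≤ T := tsum_nonneg fun d => abs_nonneg _
  refine ⟨2 * T + 1, by linarith, fun N => ?_⟩
  calc |∑ m ∈ Icc 1 N, ∑ n ∈ Icc 1 N, g ((m : ℤ) - n).natAbs|
      ≤ ∑ m ∈ Icc 1 N, ∑ n ∈ Icc 1 N, |g ((m : ℤ) - n).natAbs| :=
        (abs_sum_le_sum_abs _ _).trans (sum_le_sum fun m _ => abs_sum_le_sum_abs _ _)
    _ ≤ ∑ m ∈ Icc 1 N, 2 * T :=
        sum_le_sum fun m _ => sum_natAbs_sub_le hg (fun d => abs_nonneg _) m _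
    _ = 2 * T * N := by simp [mul_comm]
    _ ≤ (2 * T + 1) * N := by gcongr; linarith

theorem stmt_12_general (k : ℕ) (γ : Fin k → ℝ) (hγ : ∀ j, γ j < -1/2)
    (c₀ : ℝ) (H : ℝ) (hH : H = (∑ j, γ j) + (k : ℝ)/2 + 1)
    (hH' : H < 1/2)
    (a : (Fin k → ℕ+) → ℝ)
    (ha : ∀ i : Fin k → ℕ+, |a i| ≤ c₀ * ∏ j, ((i j : ℕ) : ℝ) ^ (γ j))
    (S : Fin k → Fin k → ℝ) (hS : ∀ p q, |S p q| ≤ 1)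
    (gam : ℕ → ℝ)
    (hgam : ∀ n : ℕ, gam n = ∑ σ : Equiv.Perm (Fin k),
      ∑' i : {i : Fin k → ℕ+ // Function.Injective i},
        a i.1 * a (fun p => (⟨(i.1 (σ p) : ℕ) + n, Nat.add_pos_left (i.1 (σ p)).2 n⟩ : ℕ+))
          * ∏ p, S p (σ p)) :
    (∀ n : ℕ, ∀ σ : Equiv.Perm (Fin k),
      Summable (fun i : {i : Fin k → ℕ+ // Function.Injective i} =>
        a i.1 * a (fun p => (⟨(i.1 (σ p) : ℕ) + n, Nat.add_pos_left (i.1 (σ p)).2 n⟩ : ℕ+))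
          * ∏ p, S p (σ p))) ∧
    Summable (fun n : ℕ => |gam n|) ∧
    ∃ c₁ : ℝ, 0 < c₁ ∧ ∀ N : ℕ, 1 ≤ N →
      |∑ m ∈ Finset.Icc 1 N, ∑ n ∈ Finset.Icc 1 N, gam ((m : ℤ) - (n : ℤ)).natAbs|
        ≤ c₁ * N := by
  have hα : 2 * ∑ j, γ j + k < -1 := by rw [hH] at hH'; linarith
  have hsum := summable_abs_lagTerm ha hS hγ
  have hgam_le : ∀ n, |gam n| ≤ ∑ σ, ∑' i : Fin k → ℕ+, |lagTerm a S σ n i| := fun n => by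
    have hgam_n : gam n = ∑ σ, ∑' i : {i : Fin k → ℕ+ // Function.Injective i},
        lagTerm a S σ n i.1 := hgam n
    rw [hgam_n]
    refine (abs_sum_le_sum_abs _ _).trans (sum_le_sum fun σ _ => ?_)
    calc |∑' i : {i : Fin k → ℕ+ // Function.Injective i}, lagTerm a S σ n i.1|
        ≤ ∑' i : {i : Fin k → ℕ+ // Function.Injective i}, |lagTerm a S σ n i| := by
          simpa only [Real.norm_eq_abs] using
            norm_tsum_le_tsum_norm (f := fun i : {i : Fin k → ℕ+ // Function.Injective i} =>
              lagTerm a S σ n i.1) ((hsum σ n).comp_injective Subtype.val_injective)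
      _ ≤ ∑' i : Fin k → ℕ+, |lagTerm a S σ n i| :=
          (hsum σ n).tsum_subtype_le _ {i | Function.Injective i} fun i => abs_nonneg _
  have hgam_summable : Summable fun n => |gam n| :=
    (summable_sum fun σ _ => summable_tsum_abs_lagTerm ha hS hγ hα σ).of_nonneg_of_le
      (fun n => abs_nonneg _) hgam_le
  refine ⟨fun n σ => ((hsum σ n).comp_injective Subtype.val_injective).of_abs,
    hgam_summable, ?_⟩
  obtain ⟨c₁, hc₁, hbound⟩ := exists_abs_sum_sum_natAbs_sub_le hgam_summable
  exact ⟨c₁, hc₁, fun N _ => hbound N⟩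

/-- Off-diagonal autocovariance summability, short-memory case (`H* < 1/2`). For
coefficients `a` on `(ℤ₊)^k` bounded by `c₀ i₁^{γ₁}⋯i_k^{γ_k}` with all `γ_j < -1/2`, and
correlations `Σ` bounded by `1`, the autocovariances
`γ(n) = ∑_{σ ∈ S_k} ∑'_{i injective} a(i) a(i∘σ + n) ∏_p Σ(p,σ(p))` are absolutely
convergent, absolutely summable in `n`, and `|∑_{m,n=1}^N γ(|m-n|)| ≤ c₁ N`. -/
theorem stmt_12 (k : ℕ) (hk : 1 ≤ k) (γ : Fin k → ℝ) (hγ : ∀ j, γ j < -1/2)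
    (c₀ : ℝ) (hc₀ : 0 < c₀) (H : ℝ) (hH : H = (∑ j, γ j) + (k : ℝ)/2 + 1)
    (hH' : H < 1/2)
    (a : (Fin k → ℕ+) → ℝ)
    (ha : ∀ i : Fin k → ℕ+, |a i| ≤ c₀ * ∏ j, ((i j : ℕ) : ℝ) ^ (γ j))
    (S : Fin k → Fin k → ℝ) (hS : ∀ p q, |S p q| ≤ 1)
    (gam : ℕ → ℝ)
    (hgam : ∀ n : ℕ, gam n = ∑ σ : Equiv.Perm (Fin k),
      ∑' i : {i : Fin k → ℕ+ // Function.Injective i},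
        a i.1 * a (fun p => (⟨(i.1 (σ p) : ℕ) + n, Nat.add_pos_left (i.1 (σ p)).2 n⟩ : ℕ+))
          * ∏ p, S p (σ p)) :
    (∀ n : ℕ, ∀ σ : Equiv.Perm (Fin k),
      Summable (fun i : {i : Fin k → ℕ+ // Function.Injective i} =>
        a i.1 * a (fun p => (⟨(i.1 (σ p) : ℕ) + n, Nat.add_pos_left (i.1 (σ p)).2 n⟩ : ℕ+))
          * ∏ p, S p (σ p))) ∧
    Summable (fun n : ℕ => |gam n|) ∧
    ∃ c₁ : ℝ, 0 < c₁ ∧ ∀ N : ℕ, 1 ≤ N →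
      |∑ m ∈ Finset.Icc 1 N, ∑ n ∈ Finset.Icc 1 N, gam ((m : ℤ) - (n : ℤ)).natAbs|
        ≤ c₁ * N :=
  stmt_12_general k γ hγ c₀ H hH hH' a ha S hS gam hgam
end

section
/- Let g be a GHK on (0,∞)^k with homogeneity exponent α ∈ (-(k+1)/2, -k/2), and fix t > 0. Then for Lebesgue-almost every x = (x₁,…,x_k) ∈ ℝ^k one has ∫_0^t |g(s-x₁,…,s-x_k)|·1_{{s > x₁,…,s > x_k}} ds < ∞, and the function h_t(x) := ∫_0^t g(s-x₁,…,s-x_k)·1_{{s > x₁,…,s > x_k}} ds belongs to L²(ℝ^k). -/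
open MeasureTheory

/-- The open positive orthant in `ℝ^k`. -/
def posOrthant (k : ℕ) : Set (Fin k → ℝ) := {y | ∀ i, 0 < y i}

/-- A measurable function `g : (0,∞)^k → ℝ` is a generalized Hermite kernel (GHK) with
homogeneity exponent `α ∈ (-(k+1)/2, -k/2)` if it is homogeneous of degree `α` on the
positive orthant and `∫_{(0,∞)^k} |g(𝟏+x) g(x)| dx < ∞`. -/
def IsGHK (k : ℕ) (α : ℝ) (g : (Fin k → ℝ) → ℝ) : Prop :=
  Measurable g ∧
  (-((k : ℝ) + 1)/2 < α ∧ α < -(k : ℝ)/2) ∧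
  (∀ lam : ℝ, 0 < lam → ∀ x ∈ posOrthant k, g (fun i => lam * x i) = lam ^ α * g x) ∧
  IntegrableOn (fun x => g (fun i => 1 + x i) * g x) (posOrthant k)

/-!
Write `ψ_s(x) = |g(s𝟏 - x)| 1_{x < s𝟏}` and `Φ(x) = ∫_0^t ψ_s(x) ds`. Translating by `s𝟏` and
rescaling by `u - s`, homogeneity gives `∫ ψ_s ψ_u dx = |u - s|^(2α+k) C` for `s ≠ u`, where
`C = ∫_{(0,∞)^k} |g(z) g(𝟏 + z)| dz < ∞`. Since `2α + k > -1`, Tonelli yields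
`∫ Φ² = C ∫_0^t ∫_0^t |u - s|^(2α+k) du ds < ∞`. Hence `Φ < ∞` almost everywhere, which is the
first claim, and `|h_t| ≤ Φ` puts `h_t` in `L²`.
-/

open Set
open scoped ENNReal

theorem lintegral_comp_smul {E : Type*} [NormedAddCommGroup E] [NormedSpace ℝ E]
    [MeasurableSpace E] [BorelSpace E] [FiniteDimensional ℝ E] (μ : Measure E)
    [μ.IsAddHaarMeasure] (f : E → ℝ≥0∞) {r : ℝ} (hr : r ≠ 0) :
    ∫⁻ x, f (r • x) ∂μ = ENNReal.ofReal |(r ^ Module.finrank ℝ E)⁻¹| * ∫⁻ x, f x ∂μ := by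
  rw [← smul_eq_mul, ← lintegral_smul_measure, ← Measure.map_addHaar_smul μ hr]
  exact (lintegral_map_equiv f (Homeomorph.smulOfNeZero r hr).toMeasurableEquiv).symm

lemma memLp_two_of_enorm_le {X : Type*} [MeasurableSpace X] {μ : Measure X} {f : X → ℝ}
    (hf : AEStronglyMeasurable f μ) {Φ : X → ℝ≥0∞} (hle : ∀ x, ‖f x‖ₑ ≤ Φ x)
    (hΦ : ∫⁻ x, Φ x ^ 2 ∂μ < ∞) : MemLp f 2 μ := by
  refine ⟨hf, (eLpNorm_mono_enorm (g := Φ) hle).trans_lt ?_⟩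
  rw [eLpNorm_lt_top_iff_lintegral_rpow_enorm_lt_top two_ne_zero ENNReal.ofNat_ne_top]
  simpa using hΦ

lemma intervalIntegrable_abs_rpow {β : ℝ} (hβ : -1 < β) (a b : ℝ) :
    IntervalIntegrable (fun v : ℝ => |v| ^ β) volume a b := by
  have of_nonneg : ∀ c, 0 ≤ c → IntervalIntegrable (fun v : ℝ => |v| ^ β) volume 0 c := by
    intro c hc
    refine (intervalIntegral.intervalIntegrable_rpow' hβ).congr_ae ?_
    rw [uIoc_of_le hc]
    exact (ae_restrict_mem measurableSet_Ioc).mono fun v hv => by simp [abs_of_pos hv.1]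
  have from_zero : ∀ c, IntervalIntegrable (fun v : ℝ => |v| ^ β) volume 0 c := by
    intro c
    rcases le_total 0 c with hc | hc
    · exact of_nonneg c hc
    · simpa [abs_neg] using
        (IntervalIntegrable.iff_comp_neg (by simp)).mp (of_nonneg (-c) (by linarith))
  exact (from_zero a).symm.trans (from_zero b)

lemma setLIntegral_Ioc_rpow_abs_sub_le (β : ℝ) {a b s : ℝ} (hs : s ∈ Icc a b) :
    ∫⁻ u in Ioc a b, ENNReal.ofReal (|u - s| ^ β)
      ≤ ∫⁻ v in Ioc (a - b) (b - a), ENNReal.ofReal (|v| ^ β) := by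
  have translate := (measurePreserving_sub_right volume s).setLIntegral_comp_preimage_emb
    (measurableEmbedding_subRight s) (fun v => ENNReal.ofReal (|v| ^ β)) (Ioc (a - s) (b - s))
  rw [preimage_sub_const_Ioc, sub_add_cancel, sub_add_cancel] at translate
  rw [translate]
  exact lintegral_mono_set (Ioc_subset_Ioc (by linarith [hs.2]) (by linarith [hs.1]))

lemma setLIntegral_setLIntegral_rpow_abs_sub_lt_top {β : ℝ} (hβ : -1 < β) (a b : ℝ) :
    ∫⁻ s in Ioc a b, ∫⁻ u in Ioc a b, ENNReal.ofReal (|u - s| ^ β) < ∞ := by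
  set K := ∫⁻ v in Ioc (a - b) (b - a), ENNReal.ofReal (|v| ^ β)
  have hK : K < ∞ := by
    rcases le_total (a - b) (b - a) with h | h
    · refine Integrable.lintegral_lt_top ?_
      rw [← uIoc_of_le h]
      exact (intervalIntegrable_abs_rpow hβ _ _).def'
    · simp [K, Ioc_eq_empty_of_le h]
  calc ∫⁻ s in Ioc a b, ∫⁻ u in Ioc a b, ENNReal.ofReal (|u - s| ^ β)
      ≤ ∫⁻ _ in Ioc a b, K :=
        setLIntegral_mono measurable_const fun s hs =>
          setLIntegral_Ioc_rpow_abs_sub_le β (Ioc_subset_Icc_self hs)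
    _ = K * volume (Ioc a b) := setLIntegral_const _ _
    _ < ∞ := ENNReal.mul_lt_top hK (by simp)

lemma measurableSet_posOrthant (k : ℕ) : MeasurableSet (posOrthant k) := by
  have : posOrthant k = univ.pi fun _ => Ioi 0 := by ext; simp [posOrthant]
  rw [this]
  exact MeasurableSet.univ_pi fun _ => measurableSet_Ioi

section Orthant

variable {k : ℕ} {α : ℝ} {g : (Fin k → ℝ) → ℝ}

lemma smul_mem_posOrthant_iff {r : ℝ} (hr : 0 < r) {z : Fin k → ℝ} :
    r • z ∈ posOrthant k ↔ z ∈ posOrthant k :=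
  forall_congr' fun _ => smul_pos_iff_of_pos_left hr

lemma sub_mem_posOrthant_iff {s : ℝ} {x : Fin k → ℝ} :
    (fun i => s - x i) ∈ posOrthant k ↔ ∀ i, x i < s :=
  forall_congr' fun _ => sub_pos

lemma indicator_forall_lt_eq {M : Type*} [Zero M] (f : (Fin k → ℝ) → M)
    (x : Fin k → ℝ) (s : ℝ) :
    {s : ℝ | ∀ i, x i < s}.indicator (fun s => f (fun i => s - x i)) s
      = (posOrthant k).indicator f (fun i => s - x i) := by
  by_cases h : ∀ i, x i < s
  · rw [indicator_of_mem (show s ∈ {s : ℝ | ∀ i, x i < s} from h),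
      indicator_of_mem (sub_mem_posOrthant_iff.mpr h)]
  · rw [indicator_of_notMem (show s ∉ {s : ℝ | ∀ i, x i < s} from h),
      indicator_of_notMem (mt sub_mem_posOrthant_iff.mp h)]

lemma indicator_posOrthant_smul
    (hhom : ∀ lam : ℝ, 0 < lam → ∀ x ∈ posOrthant k, g (fun i => lam * x i) = lam ^ α * g x)
    {r : ℝ} (hr : 0 < r) (z : Fin k → ℝ) :
    (posOrthant k).indicator g (r • z) = r ^ α * (posOrthant k).indicator g z := by
  by_cases hz : z ∈ posOrthant k
  · rw [indicator_of_mem ((smul_mem_posOrthant_iff hr).mpr hz), indicator_of_mem hz]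
    exact hhom r hr z hz
  · rw [indicator_of_notMem (mt (smul_mem_posOrthant_iff hr).mp hz), indicator_of_notMem hz,
      mul_zero]

lemma lintegral_enorm_indicator_mul_shift
    (hhom : ∀ lam : ℝ, 0 < lam → ∀ x ∈ posOrthant k, g (fun i => lam * x i) = lam ^ α * g x)
    {r : ℝ} (hr : 0 < r) :
    ∫⁻ y, ‖(posOrthant k).indicator g y‖ₑ * ‖(posOrthant k).indicator g (fun i => r + y i)‖ₑ
      = ENNReal.ofReal (r ^ (2 * α + k)) *
        ∫⁻ z, ‖(posOrthant k).indicator g z‖ₑ *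
          ‖(posOrthant k).indicator g (fun i => 1 + z i)‖ₑ := by
  have enorm_smul : ∀ z, ‖(posOrthant k).indicator g (r • z)‖ₑ
      = ENNReal.ofReal (r ^ α) * ‖(posOrthant k).indicator g z‖ₑ := fun z => by
    rw [indicator_posOrthant_smul hhom hr, enorm_mul,
      Real.enorm_of_nonneg (Real.rpow_nonneg hr.le α)]
  have shift_smul : ∀ z : Fin k → ℝ, (fun i => r + (r • z) i) = r • fun i => 1 + z i := by
    intro z; ext i; simp [mul_add]
  have hpow : ENNReal.ofReal (r ^ k) * (ENNReal.ofReal (r ^ α) * ENNReal.ofReal (r ^ α))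
      = ENNReal.ofReal (r ^ (2 * α + k)) := by
    rw [← ENNReal.ofReal_mul (by positivity), ← ENNReal.ofReal_mul (by positivity),
      ← Real.rpow_natCast, ← Real.rpow_add hr, ← Real.rpow_add hr]
    ring_nf
  calc _ = ENNReal.ofReal (r ^ k) * ∫⁻ z, ‖(posOrthant k).indicator g (r • z)‖ₑ *
          ‖(posOrthant k).indicator g (fun i => r + (r • z) i)‖ₑ := by
        rw [lintegral_comp_smul volume (fun y => ‖(posOrthant k).indicator g y‖ₑ *
            ‖(posOrthant k).indicator g (fun i => r + y i)‖ₑ) hr.ne',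
          Module.finrank_fin_fun, ← inv_pow, abs_of_pos (by positivity), ← mul_assoc, ← ENNReal.ofReal_mul (by positivity),
          ← mul_pow, mul_inv_cancel₀ hr.ne', one_pow, ENNReal.ofReal_one, one_mul]
    _ = _ := by
        simp_rw [shift_smul, enorm_smul]
        rw [← hpow, mul_assoc]
        congr 1
        rw [← lintegral_const_mul' _ _ (by finiteness)]
        exact lintegral_congr fun z => by ring

lemma lintegral_enorm_indicator_sub_mul_of_lt
    (hhom : ∀ lam : ℝ, 0 < lam → ∀ x ∈ posOrthant k, g (fun i => lam * x i) = lam ^ α * g x)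
    {s u : ℝ} (hsu : s < u) :
    ∫⁻ x : Fin k → ℝ, ‖(posOrthant k).indicator g (fun i => s - x i)‖ₑ *
        ‖(posOrthant k).indicator g (fun i => u - x i)‖ₑ
      = ENNReal.ofReal ((u - s) ^ (2 * α + k)) *
        ∫⁻ z, ‖(posOrthant k).indicator g z‖ₑ *
          ‖(posOrthant k).indicator g (fun i => 1 + z i)‖ₑ := by
  rw [← lintegral_enorm_indicator_mul_shift hhom (sub_pos.mpr hsu),
    ← lintegral_sub_left_eq_self _ (fun _ => s)]
  refine lintegral_congr fun x => ?_
  congr 3 <;> ext i <;> simp only [Pi.sub_apply] <;> ring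

lemma lintegral_enorm_indicator_sub_mul
    (hhom : ∀ lam : ℝ, 0 < lam → ∀ x ∈ posOrthant k, g (fun i => lam * x i) = lam ^ α * g x)
    {s u : ℝ} (hsu : s ≠ u) :
    ∫⁻ x : Fin k → ℝ, ‖(posOrthant k).indicator g (fun i => s - x i)‖ₑ *
        ‖(posOrthant k).indicator g (fun i => u - x i)‖ₑ
      = ENNReal.ofReal (|u - s| ^ (2 * α + k)) *
        ∫⁻ z, ‖(posOrthant k).indicator g z‖ₑ *
          ‖(posOrthant k).indicator g (fun i => 1 + z i)‖ₑ := by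
  rcases hsu.lt_or_gt with h | h
  · rw [abs_of_pos (sub_pos.mpr h), lintegral_enorm_indicator_sub_mul_of_lt hhom h]
  · rw [abs_sub_comm, abs_of_pos (sub_pos.mpr h), ← lintegral_enorm_indicator_sub_mul_of_lt hhom h]
    exact lintegral_congr fun x => mul_comm _ _

lemma lintegral_enorm_indicator_mul_lt_top
    (hint : IntegrableOn (fun x => g (fun i => 1 + x i) * g x) (posOrthant k)) :
    ∫⁻ z, ‖(posOrthant k).indicator g z‖ₑ *
      ‖(posOrthant k).indicator g (fun i => 1 + z i)‖ₑ < ∞ := by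
  refine lt_of_eq_of_lt ?_ hint.2
  rw [← lintegral_indicator (measurableSet_posOrthant k)]
  refine lintegral_congr fun z => ?_
  by_cases hz : z ∈ posOrthant k
  · have h1z : (fun i => 1 + z i) ∈ posOrthant k := fun i => by linarith [hz i]
    rw [indicator_of_mem hz, indicator_of_mem hz, indicator_of_mem h1z, enorm_mul, mul_comm]
  · rw [indicator_of_notMem hz, indicator_of_notMem hz, enorm_zero, zero_mul]

lemma measurable_enorm_indicator_sub (hgm : Measurable g) :
    Measurable fun p : ℝ × (Fin k → ℝ) => ‖(posOrthant k).indicator g (fun i => p.1 - p.2 i)‖ₑ :=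
  ((hgm.indicator (measurableSet_posOrthant k)).enorm).comp (by fun_prop)

theorem IsGHK.lintegral_sq_lt_top (hg : IsGHK k α g) (t : ℝ) :
    ∫⁻ x : Fin k → ℝ, (∫⁻ s in Ioc 0 t, ‖(posOrthant k).indicator g (fun i => s - x i)‖ₑ) ^ 2
      < ∞ := by
  obtain ⟨hgm, ⟨hα, -⟩, hhom, hint⟩ := hg
  set I := Ioc (0 : ℝ) t
  set ψ : ℝ → (Fin k → ℝ) → ℝ≥0∞ := fun s x => ‖(posOrthant k).indicator g (fun i => s - x i)‖ₑ
  set C := ∫⁻ z, ‖(posOrthant k).indicator g z‖ₑ * ‖(posOrthant k).indicator g (fun i => 1 + z i)‖ₑ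
  have hψ : Measurable (Function.uncurry ψ) := measurable_enorm_indicator_sub hgm
  have hC : C < ∞ := lintegral_enorm_indicator_mul_lt_top hint
  have hβ : -1 < 2 * α + k := by linarith
  have sq_eq : ∀ x, (∫⁻ s in I, ψ s x) ^ 2 = ∫⁻ s in I, ∫⁻ u in I, ψ s x * ψ u x := by
    intro x
    rw [sq, ← lintegral_mul_const _ hψ.of_uncurry_right]
    exact lintegral_congr fun s => (lintegral_const_mul _ hψ.of_uncurry_right).symm
  have off_diagonal : ∀ s, ∀ᵐ u ∂volume.restrict I, ∫⁻ x, ψ s x * ψ u x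
      = ENNReal.ofReal (|u - s| ^ (2 * α + k)) * C := fun s =>
    ae_restrict_of_ae ((countable_singleton s).ae_notMem volume |>.mono fun u hu =>
      lintegral_enorm_indicator_sub_mul hhom (Ne.symm hu))
  calc ∫⁻ x, (∫⁻ s in I, ψ s x) ^ 2
      = ∫⁻ x, ∫⁻ s in I, ∫⁻ u in I, ψ s x * ψ u x := lintegral_congr sq_eq
    _ = ∫⁻ s in I, ∫⁻ u in I, ∫⁻ x, ψ s x * ψ u x := by
        rw [lintegral_lintegral_swap (Measurable.lintegral_prod_right'
          (f := fun q : ((Fin k → ℝ) × ℝ) × ℝ => ψ q.1.2 q.1.1 * ψ q.2 q.1.1)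
          (by fun_prop)).aemeasurable]
        refine lintegral_congr fun s => ?_
        rw [lintegral_lintegral_swap (by fun_prop)]
    _ = ∫⁻ s in I, ∫⁻ u in I, ENNReal.ofReal (|u - s| ^ (2 * α + k)) * C :=
        lintegral_congr fun s => lintegral_congr_ae (off_diagonal s)
    _ = (∫⁻ s in I, ∫⁻ u in I, ENNReal.ofReal (|u - s| ^ (2 * α + k))) * C := by
        simp_rw [lintegral_mul_const' _ _ hC.ne]
    _ < ∞ := ENNReal.mul_lt_top (setLIntegral_setLIntegral_rpow_abs_sub_lt_top hβ 0 t) hC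

end Orthant

theorem stmt_16_general (k : ℕ) (α : ℝ) (g : (Fin k → ℝ) → ℝ) (hg : IsGHK k α g)
    (t : ℝ) :
    (∀ᵐ x : Fin k → ℝ,
      IntegrableOn (fun s : ℝ =>
        Set.indicator {s : ℝ | ∀ i, x i < s} (fun s => |g (fun i => s - x i)|) s)
        (Set.Ioc 0 t)) ∧
    MemLp (fun x : Fin k → ℝ =>
        ∫ s in Set.Ioc (0 : ℝ) t,
          Set.indicator {s : ℝ | ∀ i, x i < s} (fun s => g (fun i => s - x i)) s)
      2 volume := by
  have hgm : Measurable ((posOrthant k).indicator g) := hg.1.indicator (measurableSet_posOrthant k)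
  set Φ := fun x : Fin k → ℝ => ∫⁻ s in Ioc 0 t, ‖(posOrthant k).indicator g (fun i => s - x i)‖ₑ
  have hΦ : ∫⁻ x, Φ x ^ 2 < ∞ := hg.lintegral_sq_lt_top t
  have hΦ_ae : ∀ᵐ x, Φ x < ∞ := by
    have hΦm : Measurable Φ := (measurable_enorm_indicator_sub hg.1).lintegral_prod_left'
    filter_upwards [ae_lt_top (hΦm.pow_const 2) hΦ.ne] with x hx
    simpa using hx
  simp_rw [indicator_forall_lt_eq (fun y => |g y|), indicator_forall_lt_eq g]
  refine ⟨?_, ?_⟩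
  · filter_upwards [hΦ_ae] with x hx
    refine ⟨((hg.1.abs.indicator (measurableSet_posOrthant k)).comp
      (f := fun s : ℝ => fun i => s - x i) (by fun_prop)).aestronglyMeasurable, ?_⟩
    simpa [HasFiniteIntegral, Φ, enorm_indicator_eq_indicator_enorm] using hx
  · refine memLp_two_of_enorm_le ?_ (fun x => enorm_integral_le_lintegral_enorm _) hΦ
    exact (Measurable.stronglyMeasurable (f := fun p : (Fin k → ℝ) × ℝ =>
      (posOrthant k).indicator g (fun i => p.2 - p.1 i)) (by fun_prop)).integral_prod_right'
      |>.aestronglyMeasurable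

/-- If `g` is a GHK on `(0,∞)^k` and `t > 0`, then for a.e. `x ∈ ℝ^k` the integral
`∫_0^t |g(s𝟏-x)| 1_{s𝟏>x} ds` is finite, and `h_t(x) = ∫_0^t g(s𝟏-x) 1_{s𝟏>x} ds`
belongs to `L²(ℝ^k)`. -/
theorem stmt_16 (k : ℕ) (α : ℝ) (g : (Fin k → ℝ) → ℝ) (hg : IsGHK k α g)
    (t : ℝ) (ht : 0 < t) :
    (∀ᵐ x : Fin k → ℝ,
      IntegrableOn (fun s : ℝ =>
        Set.indicator {s : ℝ | ∀ i, x i < s} (fun s => |g (fun i => s - x i)|) s)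
        (Set.Ioc 0 t)) ∧
    MemLp (fun x : Fin k → ℝ =>
        ∫ s in Set.Ioc (0 : ℝ) t,
          Set.indicator {s : ℝ | ∀ i, x i < s} (fun s => g (fun i => s - x i)) s)
      2 volume :=
  stmt_16_general k α g hg t
end
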